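/- Let r_1 be the complex Lie algebra on ℂ³ with brackets [e₁,e₃]=e₁, [e₂,e₃]=e₂ (all other basis brackets zero). Then the space of derivations of r_1 has dimension 6, H²(r_1; r_1) has dimension 3, and H³(r_1; r_1) = 0. -/

import Mathlib

/-!
A cochain on `ℂ³` is determined by its values on the standard basis: an alternating bilinear `φ`
is `br (φ e₁ e₂) (φ e₁ e₃) (φ e₂ e₃)`, and an alternating trilinear `ψ` is
`det • ψ e₁ e₂ e₃`.

A derivation of `r₁` takes values in `span {e₁, e₂}` (apply it to `[e₁,e₃] = e₁` and
`[e₂,e₃] = e₂`), and every linear map into that span is a derivation; this gives 6 parameters. The 2-cocycle identity at `(e₁, e₂, e₃)` expresses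
`φ(e₁,e₂)` through `φ(e₁,e₃)` and `φ(e₂,e₃)`, which are otherwise free, so `Z²` has dimension 6;
`δf` depends injectively on the third coordinates of `f eᵢ` only, so `B²` has dimension 3.
Finally `det • v` is the coboundary of `(x, y) ↦ (x₀y₁ - x₁y₀) • (v₀, v₁, v₂/2)`, so `H³ = 0`.
-/

noncomputable section

/-- The underlying vector space `ℂ³`. -/
abbrev E3 : Type := Fin 3 → ℂ

/-- The standard basis vectors of `ℂ³`. -/
def e1 : E3 := ![1, 0, 0]
def e2 : E3 := ![0, 1, 0]
def e3 : E3 := ![0, 0, 1]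

/-- The unique antisymmetric bilinear bracket on `ℂ³` with `[e₁,e₂] = c12`,
`[e₁,e₃] = c13`, `[e₂,e₃] = c23`. -/
def br (c12 c13 c23 : E3) (u v : E3) : E3 :=
  (u 0 * v 1 - u 1 * v 0) • c12 + (u 0 * v 2 - u 2 * v 0) • c13 +
    (u 1 * v 2 - u 2 * v 1) • c23

/-- The Jacobi identity for a bracket. -/
def Jacobi (b : E3 → E3 → E3) : Prop :=
  ∀ u v w : E3, b (b u v) w + b (b v w) u + b (b w u) v = 0

/-- `f : ℂ³ → ℂ³` is ℂ-linear. -/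
def IsLin (f : E3 → E3) : Prop :=
  ∀ (a : ℂ) (x y : E3), f (a • x + y) = a • f x + f y

/-- `φ : ℂ³ × ℂ³ → ℂ³` is ℂ-bilinear. -/
def IsBil (φ : E3 → E3 → E3) : Prop :=
  (∀ (a : ℂ) (x x' y : E3), φ (a • x + x') y = a • φ x y + φ x' y) ∧
  (∀ (a : ℂ) (x y y' : E3), φ x (a • y + y') = a • φ x y + φ x y')

/-- `φ` is alternating (as a 2-cochain). -/
def IsAlt2 (φ : E3 → E3 → E3) : Prop := ∀ x : E3, φ x x = 0

/-- `ψ : (ℂ³)³ → ℂ³` is ℂ-trilinear. -/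
def IsTril (ψ : E3 → E3 → E3 → E3) : Prop :=
  (∀ (a : ℂ) (x x' y z : E3), ψ (a • x + x') y z = a • ψ x y z + ψ x' y z) ∧
  (∀ (a : ℂ) (x y y' z : E3), ψ x (a • y + y') z = a • ψ x y z + ψ x y' z) ∧
  (∀ (a : ℂ) (x y z z' : E3), ψ x y (a • z + z') = a • ψ x y z + ψ x y z')

/-- `ψ` is alternating (as a 3-cochain): it vanishes whenever two arguments coincide. -/
def IsAlt3 (ψ : E3 → E3 → E3 → E3) : Prop :=
  ∀ x y : E3, ψ x x y = 0 ∧ ψ x y y = 0 ∧ ψ x y x = 0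

/-- The coboundary of a 1-cochain `f`, with respect to the bracket `b`:
`(δf)(x,y) = [x, f y] − [y, f x] − f [x,y]`. -/
def cb1 (b : E3 → E3 → E3) (f : E3 → E3) : E3 → E3 → E3 :=
  fun x y => b x (f y) - b y (f x) - f (b x y)

/-- The coboundary of a 2-cochain `φ`, with respect to the bracket `b`:
`(δφ)(x,y,z) = [x, φ(y,z)] − [y, φ(x,z)] + [z, φ(x,y)] − φ([x,y],z) + φ([x,z],y) − φ([y,z],x)`. -/
def cb2 (b : E3 → E3 → E3) (φ : E3 → E3 → E3) : E3 → E3 → E3 → E3 :=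
  fun x y z =>
    b x (φ y z) - b y (φ x z) + b z (φ x y) - φ (b x y) z + φ (b x z) y - φ (b y z) x

/-- `f` is a derivation of the bracket `b`. -/
def IsDeriv (b : E3 → E3 → E3) (f : E3 → E3) : Prop :=
  IsLin f ∧ ∀ x y : E3, f (b x y) = b (f x) y + b x (f y)

/-- The space of derivations of the bracket `b`.  (The set of derivations is already a
ℂ-subspace, so taking its span does not change it.) -/
def DerSpace (b : E3 → E3 → E3) : Submodule ℂ (E3 → E3) :=
  Submodule.span ℂ {f : E3 → E3 | IsDeriv b f}

/-- The space of 2-cocycles with adjoint coefficients. -/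
def Z2 (b : E3 → E3 → E3) : Submodule ℂ (E3 → E3 → E3) :=
  Submodule.span ℂ {φ : E3 → E3 → E3 | IsBil φ ∧ IsAlt2 φ ∧ cb2 b φ = 0}

/-- The space of 2-coboundaries with adjoint coefficients. -/
def B2 (b : E3 → E3 → E3) : Submodule ℂ (E3 → E3 → E3) :=
  Submodule.span ℂ {φ : E3 → E3 → E3 | ∃ f : E3 → E3, IsLin f ∧ φ = cb1 b f}

/-- The space of all 3-cochains (alternating trilinear maps); every 3-cochain is a
3-cocycle since `dim = 3`. -/
def C3 : Submodule ℂ (E3 → E3 → E3 → E3) :=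
  Submodule.span ℂ {ψ : E3 → E3 → E3 → E3 | IsTril ψ ∧ IsAlt3 ψ}

/-- The space of 3-coboundaries with adjoint coefficients. -/
def B3 (b : E3 → E3 → E3) : Submodule ℂ (E3 → E3 → E3 → E3) :=
  Submodule.span ℂ
    {ψ : E3 → E3 → E3 → E3 | ∃ φ : E3 → E3 → E3, IsBil φ ∧ IsAlt2 φ ∧ ψ = cb2 b φ}

/-- The dimension of `H²(L;L)`: cocycles modulo coboundaries. -/
def H2dim (b : E3 → E3 → E3) : ℕ :=
  Module.finrank ℂ (Z2 b ⧸ (B2 b).comap (Z2 b).subtype)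

/-- The dimension of `H³(L;L)`: 3-cochains modulo coboundaries of 2-cochains. -/
def H3dim (b : E3 → E3 → E3) : ℕ :=
  Module.finrank ℂ (C3 ⧸ (B3 b).comap C3.subtype)

section QuotientDim

variable {K M N : Type*} [DivisionRing K] [AddCommGroup M] [Module K M] [AddCommGroup N]
  [Module K N]

lemma Submodule.span_eq_range_of_eq {s : Set N} {g : M →ₗ[K] N} (h : s = Set.range g) :
    Submodule.span K s = LinearMap.range g := by
  rw [h, ← LinearMap.coe_range, Submodule.span_eq]

lemma Submodule.finrank_quotient_comap_subtype {P Q : Submodule K M} [FiniteDimensional K P]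
    (hQP : Q ≤ P) :
    Module.finrank K (P ⧸ Q.comap P.subtype) = Module.finrank K P - Module.finrank K Q := by
  rw [← (Submodule.comapSubtypeEquivOfLe hQP).finrank_eq,
    ← Submodule.finrank_quotient_add_finrank (Q.comap P.subtype), Nat.add_sub_cancel]

lemma Submodule.finrank_quotient_comap_subtype_eq_zero {P Q : Submodule K M} (hPQ : P ≤ Q) :
    Module.finrank K (P ⧸ Q.comap P.subtype) = 0 := by
  have : Subsingleton (P ⧸ Q.comap P.subtype) :=
    Submodule.Quotient.subsingleton_iff.2 (by simpa [Submodule.comap_subtype_eq_top])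
  exact Module.finrank_zero_of_subsingleton

end QuotientDim

lemma E3_eq_sum (x : E3) : x = x 0 • e1 + x 1 • e2 + x 2 • e3 := by
  funext i; fin_cases i <;> simp [e1, e2, e3]

section Multilinear

variable {f : E3 → E3} {φ : E3 → E3 → E3} {ψ : E3 → E3 → E3 → E3}

lemma IsLin.map_add (hf : IsLin f) (x y : E3) : f (x + y) = f x + f y := by
  simpa using hf 1 x y

lemma IsLin.map_zero (hf : IsLin f) : f 0 = 0 := by
  simpa using hf 1 0 0

lemma IsLin.map_smul (hf : IsLin f) (a : ℂ) (x : E3) : f (a • x) = a • f x := by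
  simpa [hf.map_zero] using hf a x 0

lemma IsLin.eq_sum (hf : IsLin f) (x : E3) : f x = x 0 • f e1 + x 1 • f e2 + x 2 • f e3 := by
  conv_lhs => rw [E3_eq_sum x]
  rw [hf.map_add, hf.map_add, hf.map_smul, hf.map_smul, hf.map_smul]

lemma IsBil.left (hφ : IsBil φ) (y : E3) : IsLin (φ · y) :=
  fun a x x' => hφ.1 a x x' y

lemma IsBil.right (hφ : IsBil φ) (x : E3) : IsLin (φ x) :=
  fun a y y' => hφ.2 a x y y'

lemma IsBil.apply_swap (hφ : IsBil φ) (ha : IsAlt2 φ) (x y : E3) : φ y x = -φ x y := by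
  have h := ha (x + y)
  rw [(hφ.left _).map_add, (hφ.right _).map_add, (hφ.right _).map_add, ha x, ha y,
    zero_add, add_zero] at h
  exact eq_neg_of_add_eq_zero_right h

lemma br_isBil (c12 c13 c23 : E3) : IsBil (br c12 c13 c23) := by
  constructor <;> intros <;> simp only [br, Pi.add_apply, Pi.smul_apply, smul_eq_mul] <;> module

lemma br_isAlt2 (c12 c13 c23 : E3) : IsAlt2 (br c12 c13 c23) := by
  intro x; simp [br, mul_comm]

lemma br_e1_e3 (c12 c13 c23 : E3) : br c12 c13 c23 e1 e3 = c13 := by simp [br, e1, e3]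

lemma br_e2_e3 (c12 c13 c23 : E3) : br c12 c13 c23 e2 e3 = c23 := by simp [br, e2, e3]

lemma IsBil.eq_br (hφ : IsBil φ) (ha : IsAlt2 φ) : φ = br (φ e1 e2) (φ e1 e3) (φ e2 e3) := by
  funext x y
  rw [(hφ.left y).eq_sum x, (hφ.right e1).eq_sum y, (hφ.right e2).eq_sum y,
    (hφ.right e3).eq_sum y, ha e1, ha e2, ha e3, hφ.apply_swap ha e1 e2,
    hφ.apply_swap ha e1 e3, hφ.apply_swap ha e2 e3]
  simp only [br]
  module

lemma IsTril.bil12 (hψ : IsTril ψ) (z : E3) : IsBil (ψ · · z) :=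
  ⟨fun a x x' y => hψ.1 a x x' y z, fun a x y y' => hψ.2.1 a x y y' z⟩

lemma IsTril.bil23 (hψ : IsTril ψ) (x : E3) : IsBil (ψ x) :=
  ⟨fun a y y' z => hψ.2.1 a x y y' z, fun a y z z' => hψ.2.2 a x y z z'⟩

lemma IsTril.eq_det_smul (hψ : IsTril ψ) (ha : IsAlt3 ψ) (x y z : E3) :
    ψ x y z = Matrix.det (Matrix.of ![x, y, z]) • ψ e1 e2 e3 := by
  have swap12 (u v w : E3) : ψ v u w = -ψ u v w :=
    (hψ.bil12 w).apply_swap (fun u => (ha u w).1) u v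
  have swap23 (u v w : E3) : ψ u w v = -ψ u v w :=
    (hψ.bil23 u).apply_swap (fun v => (ha u v).2.1) v w
  rw [congrFun₂ ((hψ.bil23 x).eq_br fun v => (ha x v).2.1) y z,
    ((hψ.bil12 e2).left e1).eq_sum x, ((hψ.bil12 e3).left e1).eq_sum x,
    ((hψ.bil12 e3).left e2).eq_sum x]
  simp only [(ha _ _).1, (ha _ _).2.2]
  have h312 : ψ e3 e1 e2 = ψ e1 e2 e3 := by rw [swap12 e1 e3, swap23 e1 e2 e3, neg_neg]
  rw [h312, swap12 e1 e2 e3]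
  simp only [br, Matrix.det_fin_three, Matrix.of_apply, Matrix.cons_val, smul_zero, add_zero,
    zero_add]
  module

end Multilinear

abbrev r1 : E3 → E3 → E3 := br 0 e1 e2

lemma r1_apply (x y : E3) : r1 x y = ![x 0 * y 2 - x 2 * y 0, x 1 * y 2 - x 2 * y 1, 0] := by
  funext i; fin_cases i <;> simp [br, e1, e2]

lemma r1_e1_e2 : r1 e1 e2 = 0 := by simp [r1_apply, e1, e2]

lemma r1_e1_e3 : r1 e1 e3 = e1 := by simp [r1_apply, e1, e3]

lemma r1_e2_e3 : r1 e2 e3 = e2 := by simp [r1_apply, e2, e3]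

def derivOfRows : (E3 × E3) →ₗ[ℂ] (E3 → E3) where
  toFun pq x := ![pq.1 ⬝ᵥ x, pq.2 ⬝ᵥ x, 0]
  map_add' _ _ := by funext x i; fin_cases i <;> simp [add_dotProduct]
  map_smul' _ _ := by funext x i; fin_cases i <;> simp [smul_dotProduct]

lemma derivOfRows_single (pq : E3 × E3) (j : Fin 3) :
    derivOfRows pq (Pi.single j 1) = ![pq.1 j, pq.2 j, 0] := by
  simp [derivOfRows]

lemma derivOfRows_injective : Function.Injective derivOfRows := by
  intro pq pq' h
  have hj (j : Fin 3) := congrFun h (Pi.single j 1)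
  simp only [derivOfRows_single] at hj
  ext j
  · simpa using congrFun (hj j) 0
  · simpa using congrFun (hj j) 1

lemma isDeriv_derivOfRows (pq : E3 × E3) : IsDeriv r1 (derivOfRows pq) := by
  refine ⟨fun a x y => ?_, fun x y => ?_⟩ <;> funext i <;> fin_cases i <;>
    simp [derivOfRows, r1_apply, dotProduct, Fin.sum_univ_three] <;> ring

lemma IsDeriv.apply_two {f : E3 → E3} (hf : IsDeriv r1 f) (x : E3) : f x 2 = 0 := by
  have h13 := hf.2 e1 e3
  have h23 := hf.2 e2 e3
  rw [r1_e1_e3] at h13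
  rw [r1_e2_e3] at h23
  have h1 : f e1 2 = 0 := by simpa [r1_apply] using congrFun h13 2
  have h2 : f e2 2 = 0 := by simpa [r1_apply] using congrFun h23 2
  have h3 : f e3 2 = 0 := by simpa [r1_apply, e1, e3] using congrFun h13 0
  simp [hf.1.eq_sum x, h1, h2, h3]

lemma setOf_isDeriv_r1 : {f | IsDeriv r1 f} = Set.range derivOfRows := by
  ext f
  refine ⟨fun hf => ⟨(![f e1 0, f e2 0, f e3 0], ![f e1 1, f e2 1, f e3 1]), ?_⟩, ?_⟩
  · funext x i
    rw [hf.1.eq_sum x]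
    fin_cases i <;> simp [derivOfRows, dotProduct, Fin.sum_univ_three, hf.apply_two] <;> ring
  · rintro ⟨pq, rfl⟩
    exact isDeriv_derivOfRows pq

lemma finrank_derSpace_r1 : Module.finrank ℂ (DerSpace r1) = 6 := by
  rw [DerSpace, Submodule.span_eq_range_of_eq setOf_isDeriv_r1,
    LinearMap.finrank_range_of_inj derivOfRows_injective]
  simp

def cocycleOfValues : (E3 × E3) →ₗ[ℂ] (E3 → E3 → E3) where
  toFun uw := br ![-(uw.2 2), uw.1 2, 0] uw.1 uw.2
  map_add' _ _ := by
    funext x y i; fin_cases i <;> simp [br, Matrix.vecHead, Matrix.vecTail] <;> ring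
  map_smul' _ _ := by
    funext x y i; fin_cases i <;> simp [br, Matrix.vecHead, Matrix.vecTail] <;> ring

lemma cocycleOfValues_injective : Function.Injective cocycleOfValues := by
  intro uw uw' h
  ext1
  · simpa [cocycleOfValues, br_e1_e3] using congrFun₂ h e1 e3
  · simpa [cocycleOfValues, br_e2_e3] using congrFun₂ h e2 e3

lemma cb2_r1_cocycleOfValues (uw : E3 × E3) : cb2 r1 (cocycleOfValues uw) = 0 := by
  funext x y z i
  fin_cases i <;>
    simp [cb2, cocycleOfValues, br, r1_apply, Matrix.vecHead, Matrix.vecTail] <;> ring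

lemma IsBil.apply_e1_e2_of_cb2_r1 {φ : E3 → E3 → E3} (hφ : IsBil φ) (ha : IsAlt2 φ)
    (hc : cb2 r1 φ e1 e2 e3 = 0) : φ e1 e2 = ![-(φ e2 e3 2), φ e1 e3 2, 0] := by
  simp only [cb2, r1_e1_e2, r1_e1_e3, r1_e2_e3, hφ.apply_swap ha e1 e2,
    (hφ.left e3).map_zero] at hc
  have h0 := congrFun hc 0
  have h1 := congrFun hc 1
  have h2 := congrFun hc 2
  simp [r1_apply, e1, e2, e3, Matrix.vecHead, Matrix.vecTail] at h0 h1 h2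
  funext i
  fin_cases i <;> simp [e1, e2, e3]
  · linear_combination h0
  · linear_combination h1
  · exact h2

lemma setOf_cocycle_r1 :
    {φ | IsBil φ ∧ IsAlt2 φ ∧ cb2 r1 φ = 0} = Set.range cocycleOfValues := by
  ext φ
  refine ⟨fun ⟨hφ, ha, hc⟩ => ⟨(φ e1 e3, φ e2 e3), ?_⟩, ?_⟩
  · have h12 := hφ.apply_e1_e2_of_cb2_r1 ha (congrFun₃ hc e1 e2 e3)
    conv_rhs => rw [hφ.eq_br ha, h12]
    rfl
  · rintro ⟨uw, rfl⟩
    exact ⟨br_isBil _ _ _, br_isAlt2 _ _ _, cb2_r1_cocycleOfValues uw⟩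

def coboundaryValues : E3 →ₗ[ℂ] E3 × E3 where
  toFun v := (![v 2, 0, -(v 0)], ![0, v 2, -(v 1)])
  map_add' _ _ := by ext i <;> fin_cases i <;> simp [add_comm]
  map_smul' _ _ := by ext i <;> fin_cases i <;> simp

lemma coboundaryValues_injective : Function.Injective coboundaryValues := by
  intro v v' h
  simp only [coboundaryValues, LinearMap.coe_mk, AddHom.coe_mk, Prod.ext_iff, funext_iff,
    Fin.forall_fin_succ] at h
  funext j
  fin_cases j <;> simp_all

lemma IsLin.cb1_r1_eq {f : E3 → E3} (hf : IsLin f) :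
    cb1 r1 f = cocycleOfValues (coboundaryValues ![f e1 2, f e2 2, f e3 2]) := by
  funext x y
  simp only [cb1]
  rw [hf.eq_sum x, hf.eq_sum y, hf.eq_sum (r1 x y)]
  funext i
  fin_cases i <;>
    simp [r1_apply, cocycleOfValues, coboundaryValues, br, e1, e2, e3, Matrix.vecHead,
      Matrix.vecTail] <;> ring

lemma setOf_coboundary_r1 :
    {φ | ∃ f, IsLin f ∧ φ = cb1 r1 f} = Set.range (cocycleOfValues ∘ₗ coboundaryValues) := by
  ext φ
  constructor
  · rintro ⟨f, hf, rfl⟩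
    exact ⟨_, hf.cb1_r1_eq.symm⟩
  · rintro ⟨v, rfl⟩
    have hf : IsLin fun x => (v ⬝ᵥ x) • e3 := by
      intro a x y
      simp only [dotProduct_add, dotProduct_smul, add_smul, smul_eq_mul, mul_smul]
    have hv : ![((v ⬝ᵥ e1) • e3) 2, ((v ⬝ᵥ e2) • e3) 2, ((v ⬝ᵥ e3) • e3) 2] = v := by
      funext j
      fin_cases j <;> simp [e1, e2, e3, dotProduct, Fin.sum_univ_three]
    exact ⟨_, hf, by rw [hf.cb1_r1_eq, hv, LinearMap.comp_apply]⟩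

lemma h2dim_r1 : H2dim r1 = 3 := by
  rw [H2dim, Z2, B2, Submodule.span_eq_range_of_eq setOf_cocycle_r1,
    Submodule.span_eq_range_of_eq setOf_coboundary_r1,
    Submodule.finrank_quotient_comap_subtype (LinearMap.range_comp_le_range _ _),
    LinearMap.finrank_range_of_inj cocycleOfValues_injective,
    LinearMap.finrank_range_of_inj
      (by exact cocycleOfValues_injective.comp coboundaryValues_injective)]
  simp

lemma cb2_r1_br (v : E3) :
    cb2 r1 (br ![v 0, v 1, v 2 / 2] 0 0) = fun x y z => Matrix.det (Matrix.of ![x, y, z]) • v := by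
  funext x y z i
  fin_cases i <;> simp [cb2, br, r1_apply, Matrix.det_fin_three] <;> ring

lemma C3_le_B3_r1 : C3 ≤ B3 r1 := by
  refine Submodule.span_le.2 fun ψ ⟨hψ, ha⟩ => Submodule.subset_span ?_
  let v := ψ e1 e2 e3
  refine ⟨br ![v 0, v 1, v 2 / 2] 0 0, br_isBil _ _ _, br_isAlt2 _ _ _, ?_⟩
  rw [cb2_r1_br]
  funext x y z
  exact hψ.eq_det_smul ha x y z

/-- For the Lie algebra `r₁` with `[e₁,e₃]=e₁`, `[e₂,e₃]=e₂`: the space of derivations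
has dimension 6, `H²(r₁;r₁)` has dimension 3, and `H³(r₁;r₁) = 0`. -/
theorem r_one_cohomology :
    Module.finrank ℂ (DerSpace (br 0 e1 e2)) = 6 ∧
    H2dim (br 0 e1 e2) = 3 ∧
    H3dim (br 0 e1 e2) = 0 :=
  ⟨finrank_derSpace_r1, h2dim_r1,
    Submodule.finrank_quotient_comap_subtype_eq_zero C3_le_B3_r1⟩
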